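/- Fix n ≥ 2, α ∈ (0,n), m > 0, and β ∈ (0,1] with β < n − α. Then there exists a constant C, depending only on n, α, β, and m, such that for every Lebesgue measurable set E ⊂ ℝⁿ with |E| ≤ m and all x, y ∈ ℝⁿ, one has |v_E(x) − v_E(y)| ≤ C |x − y|^{β}. -/

import Mathlib

/-!
Put `γ = α + β < n`. For every centre `w` and every `E` with `|E| ≤ m`, cutting `E` at the unit
ball around `w` gives `∫_E |w - z|^{-γ} dz ≤ ∫_{B(0,1)} |z|^{-γ} dz + m =: K`, which is finite
because `γ < n`.

Let `r = |x - y|` and split `E` at `B = B̄(x, 2r) ⊆ B̄(y, 3r)`. On `B` we have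
`|w - z|^{-α} ≤ (3r)^β |w - z|^{-γ}` for `w = x, y`, so both near integrals are `O(r^β K)`.
Off `B`, `|y - z| ≥ |x - z| / 2`, and the mean value theorem together with
`r ≤ r^β (|x - z| / 2)^{1-β}` (this is where `β ≤ 1` enters) gives
`||x - z|^{-α} - |y - z|^{-α}| ≤ α 2^{α+β} r^β |x - z|^{-γ}`, so the far part is `O(r^β K)` too.
-/

open MeasureTheory Metric Set Bornology

/-- The Riesz potential `v_E(x) = ∫_E |x-y|^{-α} dy` of a set `E ⊆ ℝⁿ`. -/
noncomputable def rieszPotential {n : ℕ} (α : ℝ) (E : Set (EuclideanSpace ℝ (Fin n)))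
    (x : EuclideanSpace ℝ (Fin n)) : ℝ :=
  ∫ y in E, ‖x - y‖ ^ (-α)

open Module
open scoped ENNReal

section RealPowers

variable {α β : ℝ}

lemma rpow_neg_le_rpow_mul_rpow_neg_add (hα : 0 < α) (hβ : 0 ≤ β) {t ρ : ℝ} (ht : 0 ≤ t)
    (htρ : t ≤ ρ) : t ^ (-α) ≤ ρ ^ β * t ^ (-(α + β)) := by
  rcases ht.eq_or_lt with rfl | ht
  · rw [Real.zero_rpow (by linarith), Real.zero_rpow (by linarith), mul_zero]
  calc t ^ (-α) = t ^ β * t ^ (-(α + β)) := by rw [← Real.rpow_add ht]; ring_nf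
    _ ≤ ρ ^ β * t ^ (-(α + β)) := by gcongr

lemma abs_rpow_neg_sub_rpow_neg_le (hα : 0 < α) {a b c : ℝ} (hc : 0 < c) (ha : c ≤ a)
    (hb : c ≤ b) : |a ^ (-α) - b ^ (-α)| ≤ α * c ^ (-α - 1) * |a - b| := by
  have hderiv : ∀ t ∈ Ici c,
      HasDerivWithinAt (fun s : ℝ => s ^ (-α)) (-α * t ^ (-α - 1)) (Ici c) t := fun t ht =>
    (Real.hasDerivAt_rpow_const (Or.inl (hc.trans_le ht).ne')).hasDerivWithinAt
  have hbound : ∀ t ∈ Ici c, ‖-α * t ^ (-α - 1)‖ ≤ α * c ^ (-α - 1) := fun t ht => by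
    rw [norm_mul, norm_neg, Real.norm_of_nonneg hα.le,
      Real.norm_of_nonneg (Real.rpow_nonneg (hc.le.trans ht) _)]
    exact mul_le_mul_of_nonneg_left (Real.rpow_le_rpow_of_nonpos hc ht (by linarith)) hα.le
  simpa [Real.norm_eq_abs] using
    (convex_Ici c).norm_image_sub_le_of_norm_hasDerivWithin_le hderiv hbound hb ha

lemma abs_rpow_neg_sub_rpow_neg_le_of_abs_sub_le (hα : 0 < α) (hβ : β ≤ 1) {a b r : ℝ}
    (hr : 0 < r) (ha : 2 * r ≤ a) (hab : |a - b| ≤ r) :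
    |a ^ (-α) - b ^ (-α)| ≤ α * 2 ^ (α + β) * r ^ β * a ^ (-(α + β)) := by
  have ha2 : 0 < a / 2 := by linarith
  have hb : a / 2 ≤ b := by linarith [(abs_le.mp hab).2]
  have hr_le : r ≤ r ^ β * (a / 2) ^ (1 - β) := calc
    r = r ^ β * r ^ (1 - β) := by rw [← Real.rpow_add hr]; simp
    _ ≤ r ^ β * (a / 2) ^ (1 - β) := by gcongr; linarith
  calc |a ^ (-α) - b ^ (-α)| ≤ α * (a / 2) ^ (-α - 1) * |a - b| :=
        abs_rpow_neg_sub_rpow_neg_le hα ha2 (by linarith) hb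
    _ ≤ α * (a / 2) ^ (-α - 1) * (r ^ β * (a / 2) ^ (1 - β)) := by gcongr; exact hab.trans hr_le
    _ = α * r ^ β * (a / 2) ^ (-(α + β)) := by
        rw [mul_left_comm, mul_assoc, ← Real.rpow_add ha2]; ring_nf
    _ = α * 2 ^ (α + β) * r ^ β * a ^ (-(α + β)) := by
        rw [Real.div_rpow (by linarith) zero_le_two, Real.rpow_neg zero_le_two]
        field_simp

end RealPowers

section Kernel

variable {V : Type*} [NormedAddCommGroup V] {γ : ℝ}

lemma preimage_sub_left_ball_zero (x : V) (r : ℝ) : (x - ·) ⁻¹' ball 0 r = ball x r := by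
  ext z
  simp [dist_eq_norm, norm_sub_rev]

lemma norm_sub_rpow_neg_le_indicator_add_one (hγ₀ : 0 ≤ γ) (x z : V) :
    ‖x - z‖ ^ (-γ) ≤ (ball x 1).indicator (fun z => ‖x - z‖ ^ (-γ)) z + 1 := by
  by_cases hz : z ∈ ball x 1
  · simp [indicator_of_mem hz]
  · rw [indicator_of_notMem hz, zero_add]
    refine Real.rpow_le_one_of_one_le_of_nonpos ?_ (by linarith)
    simpa [dist_eq_norm, norm_sub_rev] using hz

variable [NormedSpace ℝ V] [FiniteDimensional ℝ V] [MeasurableSpace V] [BorelSpace V]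
  {μ : Measure V} [μ.IsAddHaarMeasure]

lemma integrableOn_ball_zero_norm_rpow_neg (hγ₀ : 0 ≤ γ) (hγ : γ < finrank ℝ V) (r : ℝ) :
    IntegrableOn (fun z : V => ‖z‖ ^ (-γ)) (ball 0 r) μ := by
  have hd : 0 < finrank ℝ V := by exact_mod_cast hγ₀.trans_lt hγ
  refine integrableOn_ball_of_norm_le_rpow hd hγ (C := 1) (ae_of_all _ fun z => ?_)
    (by fun_prop : Measurable fun z : V => ‖z‖ ^ (-γ)).aestronglyMeasurable
  rw [one_mul, Real.norm_of_nonneg (Real.rpow_nonneg (norm_nonneg z) _)]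

lemma integrableOn_ball_norm_sub_rpow_neg (hγ₀ : 0 ≤ γ) (hγ : γ < finrank ℝ V) (x : V)
    (r : ℝ) : IntegrableOn (fun z => ‖x - z‖ ^ (-γ)) (ball x r) μ := by
  rw [← preimage_sub_left_ball_zero]
  exact ((Measure.measurePreserving_sub_left μ x).integrableOn_comp_preimage
    (measurableEmbedding_subLeft x)).mpr (integrableOn_ball_zero_norm_rpow_neg hγ₀ hγ r)

lemma setIntegral_ball_norm_sub_rpow_neg (x : V) (r : ℝ) :
    ∫ z in ball x r, ‖x - z‖ ^ (-γ) ∂μ = ∫ z in ball 0 r, ‖z‖ ^ (-γ) ∂μ := by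
  rw [← preimage_sub_left_ball_zero]
  exact (Measure.measurePreserving_sub_left μ x).setIntegral_preimage_emb
    (measurableEmbedding_subLeft x) (fun z => ‖z‖ ^ (-γ)) (ball 0 r)

lemma integrableOn_norm_sub_rpow_neg (hγ₀ : 0 ≤ γ) (hγ : γ < finrank ℝ V) (x : V) {s : Set V}
    (hs : μ s ≠ ∞) : IntegrableOn (fun z => ‖x - z‖ ^ (-γ)) s μ := by
  refine Integrable.mono' (((integrableOn_ball_norm_sub_rpow_neg hγ₀ hγ x 1).integrable_indicator
    measurableSet_ball).integrableOn.add (integrableOn_const (C := (1 : ℝ)) hs))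
    (by fun_prop : Measurable fun z => ‖x - z‖ ^ (-γ)).aestronglyMeasurable.restrict
    (ae_of_all _ fun z => ?_)
  rw [Real.norm_of_nonneg (Real.rpow_nonneg (norm_nonneg _) _)]
  exact norm_sub_rpow_neg_le_indicator_add_one hγ₀ x z

lemma setIntegral_norm_sub_rpow_neg_le (hγ₀ : 0 ≤ γ) (hγ : γ < finrank ℝ V) (x : V) {s : Set V}
    (hs : μ s ≠ ∞) :
    ∫ z in s, ‖x - z‖ ^ (-γ) ∂μ ≤ ∫ z in ball 0 1, ‖z‖ ^ (-γ) ∂μ + μ.real s := by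
  have hind := (integrableOn_ball_norm_sub_rpow_neg hγ₀ hγ x 1 (μ := μ)).integrable_indicator
    measurableSet_ball
  calc ∫ z in s, ‖x - z‖ ^ (-γ) ∂μ
      ≤ ∫ z in s, ((ball x 1).indicator (fun z => ‖x - z‖ ^ (-γ)) z + 1) ∂μ :=
        setIntegral_mono (integrableOn_norm_sub_rpow_neg hγ₀ hγ x hs)
          (hind.integrableOn.add (integrableOn_const (C := (1 : ℝ)) hs))
          (norm_sub_rpow_neg_le_indicator_add_one hγ₀ x)
    _ = ∫ z in s, (ball x 1).indicator (fun z => ‖x - z‖ ^ (-γ)) z ∂μ + μ.real s := by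
        rw [integral_add hind.integrableOn (integrableOn_const (C := (1 : ℝ)) hs), setIntegral_const,
          smul_eq_mul, mul_one]
    _ ≤ ∫ z, (ball x 1).indicator (fun z => ‖x - z‖ ^ (-γ)) z ∂μ + μ.real s := by
        gcongr
        · exact ae_of_all _ fun z =>
            indicator_nonneg (fun z _ => Real.rpow_nonneg (norm_nonneg _) _) z
        · exact Measure.restrict_le_self
    _ = ∫ z in ball 0 1, ‖z‖ ^ (-γ) ∂μ + μ.real s := by
        rw [integral_indicator measurableSet_ball, setIntegral_ball_norm_sub_rpow_neg]

lemma setIntegral_norm_sub_rpow_neg_mono_set (hγ₀ : 0 ≤ γ) (hγ : γ < finrank ℝ V) (w : V)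
    {s t : Set V} (hs : μ s ≠ ∞) (hts : t ⊆ s) :
    ∫ z in t, ‖w - z‖ ^ (-γ) ∂μ ≤ ∫ z in s, ‖w - z‖ ^ (-γ) ∂μ :=
  setIntegral_mono_set (integrableOn_norm_sub_rpow_neg hγ₀ hγ w hs)
    (ae_of_all _ fun _ => Real.rpow_nonneg (norm_nonneg _) _) hts.eventuallyLE

variable {α β : ℝ}

lemma setIntegral_norm_sub_rpow_neg_le_of_subset_closedBall (hα : 0 < α) (hβ₀ : 0 ≤ β)
    (hαβ : α + β < finrank ℝ V) {s t : Set V} (hs : μ s ≠ ∞) (hts : t ⊆ s) {w : V} {ρ : ℝ}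
    (hρ : 0 ≤ ρ) (htw : t ⊆ closedBall w ρ) :
    ∫ z in t, ‖w - z‖ ^ (-α) ∂μ ≤ ρ ^ β * ∫ z in s, ‖w - z‖ ^ (-(α + β)) ∂μ := by
  have ht : μ t ≠ ∞ := ne_top_of_le_ne_top hs (measure_mono hts)
  calc ∫ z in t, ‖w - z‖ ^ (-α) ∂μ ≤ ∫ z in t, ρ ^ β * ‖w - z‖ ^ (-(α + β)) ∂μ := by
        refine setIntegral_mono_ae_restrict
          (integrableOn_norm_sub_rpow_neg hα.le (by linarith) w ht)
          ((integrableOn_norm_sub_rpow_neg (by linarith) hαβ w ht).const_mul _) ?_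
        filter_upwards [ae_restrict_of_ae_restrict_of_subset htw
          (ae_restrict_mem measurableSet_closedBall)] with z hz
        refine rpow_neg_le_rpow_mul_rpow_neg_add hα hβ₀ (norm_nonneg _) ?_
        rwa [mem_closedBall', dist_eq_norm] at hz
    _ = ρ ^ β * ∫ z in t, ‖w - z‖ ^ (-(α + β)) ∂μ := integral_const_mul _ _
    _ ≤ ρ ^ β * ∫ z in s, ‖w - z‖ ^ (-(α + β)) ∂μ := by
        gcongr _ * ?_
        exact setIntegral_norm_sub_rpow_neg_mono_set (by linarith) hαβ w hs hts

lemma abs_setIntegral_diff_closedBall_sub_le (hα : 0 < α) (hβ₀ : 0 ≤ β) (hβ₁ : β ≤ 1)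
    (hαβ : α + β < finrank ℝ V) {s : Set V} (hs : μ s ≠ ∞) {x y : V} (hxy : x ≠ y) :
    |∫ z in s \ closedBall x (2 * ‖x - y‖), (‖x - z‖ ^ (-α) - ‖y - z‖ ^ (-α)) ∂μ|
      ≤ α * 2 ^ (α + β) * ‖x - y‖ ^ β * ∫ z in s, ‖x - z‖ ^ (-(α + β)) ∂μ := by
  set r := ‖x - y‖
  have hr : 0 < r := norm_pos_iff.mpr (sub_ne_zero.mpr hxy)
  set t := s \ closedBall x (2 * r)
  have ht : μ t ≠ ∞ := ne_top_of_le_ne_top hs (measure_mono sdiff_subset)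
  calc |∫ z in t, (‖x - z‖ ^ (-α) - ‖y - z‖ ^ (-α)) ∂μ|
      ≤ ∫ z in t, |‖x - z‖ ^ (-α) - ‖y - z‖ ^ (-α)| ∂μ := abs_integral_le_integral_abs
    _ ≤ ∫ z in t, α * 2 ^ (α + β) * r ^ β * ‖x - z‖ ^ (-(α + β)) ∂μ := by
        refine setIntegral_mono_ae_restrict
          ((integrableOn_norm_sub_rpow_neg hα.le (by linarith) x ht).sub
            (integrableOn_norm_sub_rpow_neg hα.le (by linarith) y ht)).abs
          ((integrableOn_norm_sub_rpow_neg (by linarith) hαβ x ht).const_mul _) ?_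
        filter_upwards [ae_restrict_of_ae_restrict_of_subset (sdiff_subset_compl _ _)
          (ae_restrict_mem measurableSet_closedBall.compl)] with z hz
        refine abs_rpow_neg_sub_rpow_neg_le_of_abs_sub_le hα hβ₁ hr ?_ ?_
        · rw [mem_compl_iff, mem_closedBall', dist_eq_norm, not_le] at hz
          exact hz.le
        · simpa only [sub_sub_sub_cancel_right] using abs_norm_sub_norm_le (x - z) (y - z)
    _ = α * 2 ^ (α + β) * r ^ β * ∫ z in t, ‖x - z‖ ^ (-(α + β)) ∂μ := integral_const_mul _ _
    _ ≤ α * 2 ^ (α + β) * r ^ β * ∫ z in s, ‖x - z‖ ^ (-(α + β)) ∂μ := by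
        gcongr _ * ?_
        exact setIntegral_norm_sub_rpow_neg_mono_set (by linarith) hαβ x hs sdiff_subset


lemma abs_setIntegral_inter_closedBall_sub_le (hα : 0 < α) (hβ₀ : 0 ≤ β)
    (hαβ : α + β < finrank ℝ V) {s : Set V} (hs : μ s ≠ ∞) (x y : V) :
    |∫ z in s ∩ closedBall x (2 * ‖x - y‖), ‖x - z‖ ^ (-α) ∂μ
        - ∫ z in s ∩ closedBall x (2 * ‖x - y‖), ‖y - z‖ ^ (-α) ∂μ|
      ≤ (2 * ‖x - y‖) ^ β * ∫ z in s, ‖x - z‖ ^ (-(α + β)) ∂μ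
        + (3 * ‖x - y‖) ^ β * ∫ z in s, ‖y - z‖ ^ (-(α + β)) ∂μ := by
  set B := closedBall x (2 * ‖x - y‖)
  have hBy : B ⊆ closedBall y (3 * ‖x - y‖) :=
    closedBall_subset_closedBall' (by rw [dist_eq_norm]; linarith)
  have hx := setIntegral_norm_sub_rpow_neg_le_of_subset_closedBall hα hβ₀ hαβ hs
    inter_subset_left (by positivity) (inter_subset_right : s ∩ B ⊆ B)
  have hy := setIntegral_norm_sub_rpow_neg_le_of_subset_closedBall hα hβ₀ hαβ hs
    inter_subset_left (by positivity) (inter_subset_right.trans hBy)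
  have hx₀ : 0 ≤ ∫ z in s ∩ B, ‖x - z‖ ^ (-α) ∂μ :=
    integral_nonneg fun _ => Real.rpow_nonneg (norm_nonneg _) _
  have hy₀ : 0 ≤ ∫ z in s ∩ B, ‖y - z‖ ^ (-α) ∂μ :=
    integral_nonneg fun _ => Real.rpow_nonneg (norm_nonneg _) _
  rw [abs_sub_le_iff]
  constructor <;> linarith

theorem abs_setIntegral_norm_sub_rpow_neg_sub_le (hα : 0 < α) (hβ₀ : 0 ≤ β) (hβ₁ : β ≤ 1)
    (hαβ : α + β < finrank ℝ V) {s : Set V} (hs : μ s ≠ ∞) (x y : V) :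
    |∫ z in s, ‖x - z‖ ^ (-α) ∂μ - ∫ z in s, ‖y - z‖ ^ (-α) ∂μ|
      ≤ (2 ^ β + 3 ^ β + α * 2 ^ (α + β)) *
        (∫ z in ball 0 1, ‖z‖ ^ (-(α + β)) ∂μ + μ.real s) * ‖x - y‖ ^ β := by
  set K := ∫ z in ball (0 : V) 1, ‖z‖ ^ (-(α + β)) ∂μ + μ.real s
  have hK (w : V) : ∫ z in s, ‖w - z‖ ^ (-(α + β)) ∂μ ≤ K :=
    setIntegral_norm_sub_rpow_neg_le (by linarith) hαβ w hs
  rcases eq_or_ne x y with rfl | hxy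
  · have hK₀ : 0 ≤ K := (integral_nonneg fun _ => Real.rpow_nonneg (norm_nonneg _) _).trans (hK x)
    rw [sub_self, abs_zero]
    exact mul_nonneg (mul_nonneg (by positivity) hK₀) (Real.rpow_nonneg (norm_nonneg _) _)
  set r := ‖x - y‖
  set B := closedBall x (2 * r)
  have hfx := integrableOn_norm_sub_rpow_neg hα.le (by linarith) x hs (μ := μ)
  have hfy := integrableOn_norm_sub_rpow_neg hα.le (by linarith) y hs (μ := μ)
  have hsplit : ∫ z in s, ‖x - z‖ ^ (-α) ∂μ - ∫ z in s, ‖y - z‖ ^ (-α) ∂μ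
      = (∫ z in s ∩ B, ‖x - z‖ ^ (-α) ∂μ - ∫ z in s ∩ B, ‖y - z‖ ^ (-α) ∂μ)
        + ∫ z in s \ B, (‖x - z‖ ^ (-α) - ‖y - z‖ ^ (-α)) ∂μ := by
    rw [← integral_sub hfx hfy, ← integral_inter_add_sdiff
      (f := fun z => ‖x - z‖ ^ (-α) - ‖y - z‖ ^ (-α)) measurableSet_closedBall (hfx.sub hfy),
      integral_sub (hfx.mono_set inter_subset_left) (hfy.mono_set inter_subset_left)]
  have hnear : |∫ z in s ∩ B, ‖x - z‖ ^ (-α) ∂μ - ∫ z in s ∩ B, ‖y - z‖ ^ (-α) ∂μ|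
      ≤ (2 * r) ^ β * K + (3 * r) ^ β * K :=
    (abs_setIntegral_inter_closedBall_sub_le hα hβ₀ hαβ hs x y).trans
      (add_le_add (by gcongr; exact hK x) (by gcongr; exact hK y))
  have hfar : |∫ z in s \ B, (‖x - z‖ ^ (-α) - ‖y - z‖ ^ (-α)) ∂μ|
      ≤ α * 2 ^ (α + β) * r ^ β * K :=
    (abs_setIntegral_diff_closedBall_sub_le hα hβ₀ hβ₁ hαβ hs hxy).trans (by gcongr; exact hK x)
  calc _ ≤ |∫ z in s ∩ B, ‖x - z‖ ^ (-α) ∂μ - ∫ z in s ∩ B, ‖y - z‖ ^ (-α) ∂μ|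
        + |∫ z in s \ B, (‖x - z‖ ^ (-α) - ‖y - z‖ ^ (-α)) ∂μ| := hsplit ▸ abs_add_le _ _
    _ ≤ ((2 * r) ^ β * K + (3 * r) ^ β * K) + α * 2 ^ (α + β) * r ^ β * K := add_le_add hnear hfar
    _ = (2 ^ β + 3 ^ β + α * 2 ^ (α + β)) * K * r ^ β := by
        rw [Real.mul_rpow zero_le_two (norm_nonneg _), Real.mul_rpow zero_le_three (norm_nonneg _)]
        ring

end Kernel

theorem rieszPotential_holder_general
    (n : ℕ) (α : ℝ) (hα₀ : 0 < α)
    (m : ℝ) (hm : 0 < m) (β : ℝ) (hβ₀ : 0 < β) (hβ₁ : β ≤ 1) (hβα : β < (n : ℝ) - α) :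
    ∃ C : ℝ, ∀ E : Set (EuclideanSpace ℝ (Fin n)), MeasurableSet E →
      volume E ≤ ENNReal.ofReal m →
      ∀ x y : EuclideanSpace ℝ (Fin n),
        |rieszPotential α E x - rieszPotential α E y| ≤ C * ‖x - y‖ ^ β := by
  have hαβ : α + β < finrank ℝ (EuclideanSpace ℝ (Fin n)) := by
    rw [finrank_euclideanSpace_fin]; linarith
  refine ⟨(2 ^ β + 3 ^ β + α * 2 ^ (α + β)) *
    ((∫ z in ball (0 : EuclideanSpace ℝ (Fin n)) 1, ‖z‖ ^ (-(α + β))) + m),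
    fun E _ hEm x y => ?_⟩
  have hE : volume E ≠ ∞ := ne_top_of_le_ne_top ENNReal.ofReal_ne_top hEm
  refine (abs_setIntegral_norm_sub_rpow_neg_sub_le hα₀ hβ₀.le hβ₁ hαβ hE x y).trans ?_
  gcongr
  exact ENNReal.toReal_le_of_le_ofReal hm.le hEm

/-- Uniform Hölder estimate for Riesz potentials: for `β ∈ (0,1]` with `β < n − α`, there is a
constant `C = C(n, α, β, m)` such that `|v_E(x) − v_E(y)| ≤ C |x − y|^β` for every measurable
set `E` of measure at most `m` and all `x, y ∈ ℝⁿ`. -/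
theorem rieszPotential_holder
    (n : ℕ) (hn : 2 ≤ n) (α : ℝ) (hα₀ : 0 < α) (hα₁ : α < n)
    (m : ℝ) (hm : 0 < m) (β : ℝ) (hβ₀ : 0 < β) (hβ₁ : β ≤ 1) (hβα : β < (n : ℝ) - α) :
    ∃ C : ℝ, ∀ E : Set (EuclideanSpace ℝ (Fin n)), MeasurableSet E →
      volume E ≤ ENNReal.ofReal m →
      ∀ x y : EuclideanSpace ℝ (Fin n),
        |rieszPotential α E x - rieszPotential α E y| ≤ C * ‖x - y‖ ^ β :=
  rieszPotential_holder_general n α hα₀ m hm β hβ₀ hβ₁ hβα
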